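/- arXiv:1802.09094 — 2 statements merged into one kernel-verified Lean document; each statement's English description precedes it below -/
import Mathlib

section
/- For all integers n ≥ 2 and E ≥ 1 there exists a constant C(n,E) > 0 with the following property: let 0 < δ ≤ λ ≤ 1, let S ⊆ ℝ^n be a semialgebraic set of complexity at most E, and let T be a δ-tube in ℝ^n with direction e such that |T ∩ S| ≥ λ·|T|. Then T_δ ∩ S_δ (the intersection of the closed δ-neighborhoods of T and of S) contains a cylinder of radius δ and length λ/C(n,E) whose axis is parallel to e. -/
/-!
Averaging the length of the slices `{t | x + t • e ∈ T ∩ S}` over `x ∈ T` (Tonelli and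
translation invariance) produces a line parallel to `e` on which `T ∩ S` has length `> λ/2`.
On that line a basic piece of `S` is cut out by univariate polynomials: the equations vanish
identically, since they vanish on a set of positive length, and the at most `E` roots of the
inequalities split the line into at most `E + 1` intervals on which every inequality keeps its
sign. Pigeonholing over the at most `E` pieces and these intervals gives a segment of length
`≳ λ/E²` inside `T ∩ S` (the slice of the convex `T` is an interval), and the cylinder around it
lies in the `δ`-neighbourhoods.
-/

open MeasureTheory Metric Set

noncomputable section

/-- A basic semialgebraic set in `ℝ^d` of complexity at most `E`: cut out by finitely many
polynomial equations `P i = 0` and strict inequalities `Q j > 0`, the degrees of all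
polynomials involved summing to at most `E`. -/
def IsBasicOfComplexity {d : ℕ} (E : ℕ) (S : Set (EuclideanSpace ℝ (Fin d))) : Prop :=
  ∃ Ps Qs : List (MvPolynomial (Fin d) ℝ),
    ((Ps ++ Qs).map MvPolynomial.totalDegree).sum ≤ E ∧
    S = {x | (∀ p ∈ Ps, MvPolynomial.eval (fun i => x i) p = 0) ∧
             (∀ q ∈ Qs, 0 < MvPolynomial.eval (fun i => x i) q)}

/-- A semialgebraic set in `ℝ^d` of complexity at most `E`: a union of at most `E` basic
sets, each of complexity at most `E`. -/
def IsSemialgebraicOfComplexity {d : ℕ} (E : ℕ) (S : Set (EuclideanSpace ℝ (Fin d))) : Prop :=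
  ∃ B : List (Set (EuclideanSpace ℝ (Fin d))),
    B.length ≤ E ∧ (∀ b ∈ B, IsBasicOfComplexity E b) ∧ S = {x | ∃ b ∈ B, x ∈ b}

/-- A δ-tube in `ℝ^d`: the closed δ-neighborhood of a unit line segment contained in the
ball `B(0,2)`, with direction the unit vector `e`. -/
def IsDeltaTube {d : ℕ} (δ : ℝ) (e : EuclideanSpace ℝ (Fin d)) (T : Set (EuclideanSpace ℝ (Fin d))) : Prop :=
  ‖e‖ = 1 ∧ ∃ a : EuclideanSpace ℝ (Fin d),
    (∀ t ∈ Icc (0:ℝ) 1, a + t • e ∈ closedBall (0 : EuclideanSpace ℝ (Fin d)) 2) ∧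
    T = {x | ∃ t ∈ Icc (0:ℝ) 1, dist x (a + t • e) ≤ δ}

open scoped ENNReal Polynomial

theorem exists_lt_measure_of_subset_biUnion {α ι : Type*} [MeasurableSpace α] (μ : Measure α)
    {s : Finset ι} {f : ι → Set α} {A : Set α} (hA : A ⊆ ⋃ i ∈ s, f i) {c : ℝ≥0∞}
    (h : s.card * c < μ A) : ∃ i ∈ s, c < μ (f i) := by
  by_contra! hf
  refine (h.trans_le ?_).false
  calc μ A ≤ ∑ i ∈ s, μ (f i) := (measure_mono hA).trans (measure_biUnion_finset_le s f)
    _ ≤ ∑ _ ∈ s, c := Finset.sum_le_sum hf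
    _ = s.card * c := by rw [Finset.sum_const, nsmul_eq_mul]

section LineSlices

variable {V : Type*} [NormedAddCommGroup V] [NormedSpace ℝ V] [MeasurableSpace V] [BorelSpace V]
  [SecondCountableTopology V] (μ : Measure V) [SFinite μ]

theorem setLIntegral_volume_lineSlice {T A : Set V} (hT : MeasurableSet T) (hA : MeasurableSet A)
    (e : V) :
    ∫⁻ x in T, volume {t : ℝ | x + t • e ∈ A} ∂μ = ∫⁻ t : ℝ, μ (T ∩ {x | x + t • e ∈ A}) := by
  have hP : MeasurableSet {p : V × ℝ | p.1 ∈ T ∧ p.1 + p.2 • e ∈ A} :=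
    (measurable_fst hT).inter (hA.preimage (by fun_prop))
  have h := Measure.prod_apply_symm (μ := μ) (ν := (volume : Measure ℝ)) hP
  rw [Measure.prod_apply hP] at h
  convert h using 1
  · rw [← lintegral_indicator hT]
    congr 1 with x
    by_cases hx : x ∈ T <;> simp [hx, preimage]
  · rfl

theorem setLIntegral_volume_lineSlice_comm [μ.IsAddRightInvariant] {T A : Set V}
    (hT : MeasurableSet T) (hA : MeasurableSet A) (e : V) :
    ∫⁻ x in T, volume {t : ℝ | x + t • e ∈ A} ∂μ =
      ∫⁻ y in A, volume {t : ℝ | y - t • e ∈ T} ∂μ := by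
  simp_rw [sub_eq_add_neg, ← smul_neg]
  rw [setLIntegral_volume_lineSlice μ hT hA, setLIntegral_volume_lineSlice μ hA hT]
  congr 1 with t
  rw [← measure_preimage_add_right μ (t • e) (A ∩ _)]
  congr 1 with x
  simp [and_comm]

theorem exists_lt_volume_lineSlice [μ.IsAddRightInvariant] {T A : Set V} (hT : MeasurableSet T)
    (hA : MeasurableSet A) (e : V) (hAT : ∀ y ∈ A, 1 ≤ volume {t : ℝ | y - t • e ∈ T})
    {c : ℝ≥0∞} (hc : c * μ T < μ A) : ∃ x ∈ T, c < volume {t : ℝ | x + t • e ∈ A} := by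
  by_contra! h
  refine (hc.trans_le ?_).false
  calc μ A = ∫⁻ _ in A, 1 ∂μ := (setLIntegral_one A).symm
    _ ≤ ∫⁻ y in A, volume {t : ℝ | y - t • e ∈ T} ∂μ := setLIntegral_mono' hA hAT
    _ = ∫⁻ x in T, volume {t : ℝ | x + t • e ∈ A} ∂μ :=
      (setLIntegral_volume_lineSlice_comm μ hT hA e).symm
    _ ≤ ∫⁻ _ in T, c ∂μ := setLIntegral_mono' hT h
    _ = c * μ T := setLIntegral_const T c

end LineSlices

theorem exists_lt_sub_of_ofReal_lt_volume {s : Set ℝ} {ℓ : ℝ} (h : ENNReal.ofReal ℓ < volume s) :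
    ∃ t ∈ s, ∃ t' ∈ s, ℓ < t' - t := by
  by_contra! hs
  refine (h.trans_le ((Real.volume_le_diam s).trans (ediam_le fun t ht t' ht' => ?_))).false
  rw [edist_dist, Real.dist_eq]
  exact ENNReal.ofReal_le_ofReal (abs_sub_le_iff.2 ⟨hs t' ht' t ht, hs t ht t' ht'⟩)

/-- Pigeonhole over the number of elements of `Z` below a point: two points with the same count
have no element of `Z` between them. -/
theorem exists_lt_sub_forall_notMem_Ioo (Z : Finset ℝ) {G : Set ℝ} {ℓ : ℝ}
    (h : (Z.card + 1 : ℝ≥0∞) * ENNReal.ofReal ℓ < volume G) :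
    ∃ t ∈ G, ∃ t' ∈ G, ℓ < t' - t ∧ ∀ z ∈ Z, z ∉ Ioo t t' := by
  let k : ℝ → ℕ := fun t => (Z.filter (· < t)).card
  have hcover : G ⊆ ⋃ i ∈ Finset.range (Z.card + 1), {t ∈ G | k t = i} := fun t ht =>
    mem_biUnion (Finset.mem_range.2 (Nat.lt_succ_of_le (Finset.card_filter_le _ _))) ⟨ht, rfl⟩
  obtain ⟨i, -, hi⟩ := exists_lt_measure_of_subset_biUnion volume hcover (by simpa using h)
  obtain ⟨t, ⟨htG, hti⟩, t', ⟨ht'G, ht'i⟩, hℓ⟩ := exists_lt_sub_of_ofReal_lt_volume hi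
  refine ⟨t, htG, t', ht'G, hℓ, fun z hz hzI => ?_⟩
  have hk : k t < k t' := by
    refine Finset.card_lt_card (Finset.ssubset_iff_of_subset ?_ |>.2 ⟨z, ?_, ?_⟩)
    · exact Finset.monotone_filter_right _ fun s _ (hs : s < t) => hs.trans (hzI.1.trans hzI.2)
    · simp [hz, hzI.2]
    · simp [hzI.1.le]
  omega

theorem pos_on_Icc_of_forall_ne_zero {f : ℝ → ℝ} {t t' : ℝ} (hf : ContinuousOn f (Icc t t'))
    (ht : 0 < f t) (ht' : 0 < f t') (hf0 : ∀ s ∈ Ioo t t', f s ≠ 0) : ∀ s ∈ Icc t t', 0 < f s := by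
  intro s hs
  by_contra! hfs
  obtain ⟨w, hw, hw0⟩ :=
    intermediate_value_Icc' hs.1 (hf.mono (Icc_subset_Icc_right hs.2)) ⟨hfs, ht.le⟩
  exact hf0 w ⟨hw.1.lt_of_ne (by rintro rfl; linarith), (hw.2.trans hs.2).lt_of_ne
    (by rintro rfl; linarith)⟩ hw0

def univariateBasicSet (Ps Qs : List ℝ[X]) : Set ℝ :=
  {s | (∀ p ∈ Ps, p.eval s = 0) ∧ ∀ q ∈ Qs, 0 < q.eval s}

/-- Equations that hold on a set of positive measure are trivial, and between two consecutive
roots of `∏ q` every inequality keeps its sign. -/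
theorem exists_Icc_subset_univariateBasicSet {Ps Qs : List ℝ[X]} {E : ℕ}
    (hdeg : (Qs.map Polynomial.natDegree).sum ≤ E) {G : Set ℝ}
    (hG : G ⊆ univariateBasicSet Ps Qs) {ℓ : ℝ}
    (h : (E + 1 : ℝ≥0∞) * ENNReal.ofReal ℓ < volume G) :
    ∃ t ∈ G, ∃ t' ∈ G, ℓ < t' - t ∧ Icc t t' ⊆ univariateBasicSet Ps Qs := by
  have hG0 : volume G ≠ 0 := (h.trans_le' zero_le).ne'
  have hPs : ∀ p ∈ Ps, p = 0 := fun p hp => by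
    by_contra hp0
    exact hG0 (measure_mono_null (fun s hs => (hG hs).1 p hp)
      ((Polynomial.finite_setOfPred_isRoot hp0).measure_zero _))
  have hR : Qs.prod ≠ 0 := fun h0 => hG0 <| measure_mono_null
    (fun s hs => by simpa using (hG hs).2 0 (List.prod_eq_zero_iff.1 h0)) measure_empty
  have hZ : Qs.prod.roots.toFinset.card ≤ E := (Multiset.toFinset_card_le _).trans
    (Qs.prod.card_roots'.trans ((Polynomial.natDegree_list_prod_le _).trans hdeg))
  obtain ⟨t, ht, t', ht', hℓ, hI⟩ := exists_lt_sub_forall_notMem_Ioo Qs.prod.roots.toFinset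
    (h.trans_le' (by gcongr))
  refine ⟨t, ht, t', ht', hℓ, fun s hs => ⟨fun p hp => by simp [hPs p hp], fun q hq => ?_⟩⟩
  refine pos_on_Icc_of_forall_ne_zero q.continuous.continuousOn ((hG ht).2 q hq)
    ((hG ht').2 q hq) (fun w hw hw0 => hI w ?_ hw) s hs
  rw [Multiset.mem_toFinset, Polynomial.mem_roots hR, Polynomial.IsRoot.def,
    Polynomial.eval_list_prod, List.prod_eq_zero_iff]
  exact List.mem_map.2 ⟨q, hq, hw0⟩

namespace MvPolynomial

variable {σ R : Type*} [CommSemiring R]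

def lineRestrict (x v : σ → R) (p : MvPolynomial σ R) : R[X] :=
  aeval (fun i => Polynomial.C (v i) * Polynomial.X + Polynomial.C (x i)) p

theorem eval_lineRestrict (x v : σ → R) (p : MvPolynomial σ R) (t : R) :
    (lineRestrict x v p).eval t = eval (x + t • v) p := by
  rw [lineRestrict, ← Polynomial.coe_aeval_eq_eval, comp_aeval_apply]
  have hline : (fun i => Polynomial.aeval t (Polynomial.C (v i) * Polynomial.X +
      Polynomial.C (x i))) = x + t • v := by
    ext i
    simp only [map_add, map_mul, Polynomial.aeval_C, Polynomial.aeval_X, Pi.add_apply,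
      Pi.smul_apply, smul_eq_mul, Algebra.algebraMap_self, RingHom.id_apply]
    ring
  rw [hline]
  rfl

theorem natDegree_lineRestrict_le (x v : σ → R) (p : MvPolynomial σ R) :
    (lineRestrict x v p).natDegree ≤ p.totalDegree := by
  rw [lineRestrict, aeval_def, eval₂_eq]
  refine Polynomial.natDegree_sum_le_of_forall_le _ _ fun m hm => ?_
  refine (Polynomial.natDegree_C_mul_le _ _).trans ((Polynomial.natDegree_prod_le _ _).trans ?_)
  refine (Finset.sum_le_sum fun i _ =>
    Polynomial.natDegree_pow_le_of_le (m i) Polynomial.natDegree_linear_le).trans ?_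
  simpa only [mul_one, Finsupp.sum] using le_totalDegree hm

end MvPolynomial

section Semialgebraic

variable {d E : ℕ}

theorem measurable_eval_euclidean (p : MvPolynomial (Fin d) ℝ) :
    Measurable fun x : EuclideanSpace ℝ (Fin d) => MvPolynomial.eval (fun i => x i) p :=
  ((MvPolynomial.continuous_eval p).comp (PiLp.continuous_ofLp 2 _)).measurable

theorem IsBasicOfComplexity.measurableSet {b : Set (EuclideanSpace ℝ (Fin d))}
    (hb : IsBasicOfComplexity E b) : MeasurableSet b := by
  obtain ⟨Ps, Qs, -, rfl⟩ := hb
  simp only [ofPred_and, ofPred_forall]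
  exact .inter (.biInter (s := {p | p ∈ Ps}) Ps.finite_toSet.countable fun p _ =>
      measurableSet_eq_fun (measurable_eval_euclidean p) measurable_const)
    (.biInter (s := {q | q ∈ Qs}) Qs.finite_toSet.countable fun q _ =>
      measurableSet_lt measurable_const (measurable_eval_euclidean q))

theorem IsSemialgebraicOfComplexity.measurableSet {S : Set (EuclideanSpace ℝ (Fin d))}
    (hS : IsSemialgebraicOfComplexity E S) : MeasurableSet S := by
  obtain ⟨B, -, hB, rfl⟩ := hS
  convert MeasurableSet.biUnion (s := {b | b ∈ B}) B.finite_toSet.countable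
    fun b hb => (hB b hb).measurableSet
  ext
  simp

theorem IsBasicOfComplexity.exists_lineSlice_eq {b : Set (EuclideanSpace ℝ (Fin d))}
    (hb : IsBasicOfComplexity E b) (x v : EuclideanSpace ℝ (Fin d)) :
    ∃ Ps Qs : List ℝ[X], (Qs.map Polynomial.natDegree).sum ≤ E ∧
      {t : ℝ | x + t • v ∈ b} = univariateBasicSet Ps Qs := by
  obtain ⟨Ps, Qs, hdeg, rfl⟩ := hb
  let r := MvPolynomial.lineRestrict (fun i => x i) (fun i => v i)
  refine ⟨Ps.map r, Qs.map r, ?_, ?_⟩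
  · rw [List.map_map]
    refine (List.sum_le_sum fun q _ => MvPolynomial.natDegree_lineRestrict_le _ _ q).trans ?_
    refine le_trans ?_ hdeg
    simp
  · ext t
    simp only [univariateBasicSet, r, List.forall_mem_map, MvPolynomial.eval_lineRestrict]
    rfl

theorem IsSemialgebraicOfComplexity.exists_Icc_subset_lineSlice
    {S : Set (EuclideanSpace ℝ (Fin d))} (hS : IsSemialgebraicOfComplexity E S)
    (x v : EuclideanSpace ℝ (Fin d)) {G : Set ℝ} (hG : G ⊆ {t | x + t • v ∈ S}) {ℓ : ℝ}
    (h : (E + 1 : ℝ≥0∞) ^ 2 * ENNReal.ofReal ℓ < volume G) :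
    ∃ t ∈ G, ∃ t' ∈ G, ℓ < t' - t ∧ ∀ s ∈ Icc t t', x + s • v ∈ S := by
  obtain ⟨B, hBlen, hB, rfl⟩ := hS
  have hcover : G ⊆ ⋃ b ∈ B.toFinset, G ∩ {t | x + t • v ∈ b} := fun t ht => by
    obtain ⟨b, hb, hxb⟩ := hG ht
    exact mem_biUnion (List.mem_toFinset.2 hb) ⟨ht, hxb⟩
  have hcard : (B.toFinset.card : ℝ≥0∞) ≤ E + 1 := by
    exact_mod_cast (B.toFinset_card_le.trans hBlen).trans E.le_succ
  obtain ⟨b, hb, hGb⟩ := exists_lt_measure_of_subset_biUnion volume hcover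
    (c := (E + 1) * ENNReal.ofReal ℓ) (h.trans_le' (by rw [sq, mul_assoc]; gcongr))
  obtain ⟨Ps, Qs, hdeg, hslice⟩ := (hB b (List.mem_toFinset.1 hb)).exists_lineSlice_eq x v
  obtain ⟨t, ht, t', ht', hℓ, hI⟩ := exists_Icc_subset_univariateBasicSet hdeg
    (fun s hs => hslice ▸ hs.2) hGb
  refine ⟨t, ht.1, t', ht'.1, hℓ, fun s hs => ⟨b, List.mem_toFinset.1 hb, ?_⟩⟩
  exact (hslice ▸ hI hs :)

end Semialgebraic

theorem segment_eq_image_add_smul {V : Type*} [AddCommGroup V] [Module ℝ V] (a e : V) :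
    segment ℝ a (a + e) = (fun t : ℝ => a + t • e) '' Icc 0 1 := by
  rw [segment_eq_image', add_sub_cancel_left]

theorem Convex.ordConnected_lineSlice {V : Type*} [AddCommGroup V] [Module ℝ V] {s : Set V}
    (hs : Convex ℝ s) (x e : V) : OrdConnected {t : ℝ | x + t • e ∈ s} := by
  have : {t : ℝ | x + t • e ∈ s} = AffineMap.lineMap x (x + e) ⁻¹' s := by
    ext t
    simp [AffineMap.lineMap_apply_module', add_comm]
  rw [this]
  exact (hs.affine_preimage _).ordConnected

namespace IsDeltaTube

variable {d : ℕ} {δ : ℝ} {e : EuclideanSpace ℝ (Fin d)} {T : Set (EuclideanSpace ℝ (Fin d))}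

theorem exists_eq_cthickening_segment (hT : IsDeltaTube δ e T) (hδ : 0 ≤ δ) :
    ∃ a, T = cthickening δ (segment ℝ a (a + e)) := by
  obtain ⟨-, a, -, rfl⟩ := hT
  refine ⟨a, ?_⟩
  rw [segment_eq_image_add_smul,
    (isCompact_Icc.image (by fun_prop)).cthickening_eq_biUnion_closedBall hδ]
  ext x
  simp

theorem convex (hT : IsDeltaTube δ e T) (hδ : 0 ≤ δ) : Convex ℝ T := by
  obtain ⟨a, rfl⟩ := hT.exists_eq_cthickening_segment hδ
  exact (convex_segment _ _).cthickening δ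

theorem isCompact (hT : IsDeltaTube δ e T) (hδ : 0 ≤ δ) : IsCompact T := by
  obtain ⟨a, rfl⟩ := hT.exists_eq_cthickening_segment hδ
  rw [segment_eq_image_add_smul]
  exact (isCompact_Icc.image (by fun_prop)).cthickening

theorem volume_ne_zero (hT : IsDeltaTube δ e T) (hδ : 0 < δ) : volume T ≠ 0 := by
  obtain ⟨-, a, -, rfl⟩ := hT
  refine (measure_closedBall_pos volume a hδ).ne' ∘ measure_mono_null fun x hx => ?_
  exact ⟨0, ⟨le_rfl, zero_le_one⟩, by simpa using hx⟩

theorem one_le_volume_lineSlice (hT : IsDeltaTube δ e T) {y : EuclideanSpace ℝ (Fin d)}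
    (hy : y ∈ T) : 1 ≤ volume {t : ℝ | y - t • e ∈ T} := by
  obtain ⟨-, a, -, rfl⟩ := hT
  obtain ⟨s, -, hys⟩ := hy
  have hIcc : Icc (s - 1) s ⊆ {t : ℝ | ∃ r ∈ Icc (0 : ℝ) 1, dist (y - t • e) (a + r • e) ≤ δ} :=
    fun t ht => ⟨s - t, ⟨by linarith [ht.2], by linarith [ht.1]⟩,
      by rwa [sub_smul, ← add_sub_assoc, dist_sub_right]⟩
  simpa [Real.volume_Icc] using measure_mono (μ := volume) hIcc

end IsDeltaTube

theorem statement10_general (n E : ℕ) :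
    ∃ C : ℝ, 0 < C ∧
      ∀ δ lam : ℝ, 0 < δ → δ ≤ lam → lam ≤ 1 →
      ∀ S : Set (EuclideanSpace ℝ (Fin n)), IsSemialgebraicOfComplexity E S →
      ∀ (T : Set (EuclideanSpace ℝ (Fin n))) (e : EuclideanSpace ℝ (Fin n)),
        IsDeltaTube δ e T →
        ENNReal.ofReal lam * volume T ≤ volume (T ∩ S) →
        ∃ p : EuclideanSpace ℝ (Fin n),
          {z | ∃ t ∈ Set.Icc (0:ℝ) (lam / C), ∃ w : EuclideanSpace ℝ (Fin n),
              inner ℝ w e = (0:ℝ) ∧ ‖w‖ ≤ δ ∧ z = p + t • e + w}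
            ⊆ Metric.cthickening δ T ∩ Metric.cthickening δ S := by
  refine ⟨2 * ((E : ℝ) + 1) ^ 2, by positivity, ?_⟩
  intro δ lam hδ hδlam _ S hS T e hT hTS
  have hlam : 0 < lam := hδ.trans_le hδlam
  have hTm : MeasurableSet T := (hT.isCompact hδ.le).isClosed.measurableSet
  have hhalf : ENNReal.ofReal (lam / 2) * volume T < volume (T ∩ S) :=
    (ENNReal.mul_lt_mul_left (hT.volume_ne_zero hδ) (hT.isCompact hδ.le).measure_ne_top
      (ENNReal.ofReal_lt_ofReal_iff'.2 ⟨by linarith, hlam⟩)).trans_le hTS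
  obtain ⟨x, -, hx⟩ := exists_lt_volume_lineSlice volume hTm (hTm.inter hS.measurableSet) e
    (fun y hy => hT.one_le_volume_lineSlice hy.1) hhalf
  have hℓ : ((E : ℝ≥0∞) + 1) ^ 2 * ENNReal.ofReal (lam / (2 * ((E : ℝ) + 1) ^ 2)) =
      ENNReal.ofReal (lam / 2) := by
    rw [show ((E : ℝ≥0∞) + 1) ^ 2 = ENNReal.ofReal (((E : ℝ) + 1) ^ 2) by
      rw [ENNReal.ofReal_pow (by positivity), ENNReal.ofReal_add (by positivity) zero_le_one,
        ENNReal.ofReal_natCast, ENNReal.ofReal_one], ← ENNReal.ofReal_mul (by positivity)]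
    congr 1
    field_simp
  obtain ⟨t, ht, t', ht', hlen, hSI⟩ := hS.exists_Icc_subset_lineSlice x e
    (G := {t | x + t • e ∈ T ∩ S}) (fun s hs => hs.2) (hℓ ▸ hx)
  have hTI := ((hT.convex hδ.le).ordConnected_lineSlice x e).out ht.1 ht'.1
  refine ⟨x + t • e, ?_⟩
  rintro _ ⟨s, hs, w, -, hw, rfl⟩
  have hts : t + s ∈ Icc t t' := ⟨by linarith [hs.1], by linarith [hs.2]⟩
  have hdist : dist (x + t • e + s • e + w) (x + (t + s) • e) ≤ δ := by
    rwa [add_smul, ← add_assoc, dist_self_add_left]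
  exact ⟨mem_cthickening_of_dist_le _ _ δ T (hTI hts) hdist,
    mem_cthickening_of_dist_le _ _ δ S (hSI _ hts) hdist⟩

/-- the geometric step in the proof of Theorem 4.1 of Katz–Rogers.
For all integers `n ≥ 2`, `E ≥ 1` there is a constant `C(n,E) > 0` so that whenever
`0 < δ ≤ λ ≤ 1`, `S ⊆ ℝ^n` is semialgebraic of complexity at most `E`, and `T` is a δ-tube
with direction `e` satisfying `|T ∩ S| ≥ λ|T|`, the set `T_δ ∩ S_δ` contains a cylinder of
radius `δ` and length `λ / C` whose axis is parallel to `e`. -/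
theorem statement10 (n E : ℕ) (hn : 2 ≤ n) (hE : 1 ≤ E) :
    ∃ C : ℝ, 0 < C ∧
      ∀ δ lam : ℝ, 0 < δ → δ ≤ lam → lam ≤ 1 →
      ∀ S : Set (EuclideanSpace ℝ (Fin n)), IsSemialgebraicOfComplexity E S →
      ∀ (T : Set (EuclideanSpace ℝ (Fin n))) (e : EuclideanSpace ℝ (Fin n)),
        IsDeltaTube δ e T →
        ENNReal.ofReal lam * volume T ≤ volume (T ∩ S) →
        ∃ p : EuclideanSpace ℝ (Fin n),
          {z | ∃ t ∈ Set.Icc (0:ℝ) (lam / C), ∃ w : EuclideanSpace ℝ (Fin n),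
              inner ℝ w e = (0:ℝ) ∧ ‖w‖ ≤ δ ∧ z = p + t • e + w}
            ⊆ Metric.cthickening δ T ∩ Metric.cthickening δ S :=
  statement10_general n E
end
end

section
/- Let n ≥ 1 be an integer, let I ⊆ ℝ be a compact interval of positive length |I|, and let r_1, …, r_n ∈ ℂ. Then the set of t ∈ I such that |t − r_j| ≥ |I|/(4n) for all j = 1, …, n has one-dimensional Lebesgue measure at least |I|/2. Consequently, for any a ∈ ℂ, the polynomial P(t) = a·(t−r_1)···(t−r_n) satisfies |P(t)| ≥ (|I|/(4n))^n·|a| on a subset of I of measure at least |I|/2. -/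
open MeasureTheory Set

/-! Each condition `‖t - r_j‖ < δ` confines the real number `t` to an interval of length `2δ`
around `Re r_j`, so at most `2nδ = |I|/2` of `I` is lost when `δ = |I|/(4n)`. On what is left,
every factor of `P(t)` has modulus at least `δ`. -/

theorem volume_setOf_norm_ofReal_sub_lt_le (z : ℂ) (δ : ℝ) :
    volume {t : ℝ | ‖(t : ℂ) - z‖ < δ} ≤ ENNReal.ofReal (2 * δ) :=
  calc volume {t : ℝ | ‖(t : ℂ) - z‖ < δ}
      ≤ volume (Metric.ball z.re δ) := measure_mono fun t (ht : ‖(t : ℂ) - z‖ < δ) =>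
        calc dist t z.re = |((t : ℂ) - z).re| := by simp [Real.dist_eq]
          _ ≤ ‖(t : ℂ) - z‖ := Complex.abs_re_le_norm _
          _ < δ := ht
    _ = ENNReal.ofReal (2 * δ) := Real.volume_ball _ _

theorem volume_le_volume_setOf_forall_le_norm_sub_add {ι : Type*} [Fintype ι] (s : Set ℝ)
    (z : ι → ℂ) (δ : ℝ) :
    volume s ≤ volume {t ∈ s | ∀ j, δ ≤ ‖(t : ℂ) - z j‖} +
      Fintype.card ι * ENNReal.ofReal (2 * δ) := by
  have hcover : s ⊆ {t ∈ s | ∀ j, δ ≤ ‖(t : ℂ) - z j‖} ∪ ⋃ j, {t : ℝ | ‖(t : ℂ) - z j‖ < δ} := by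
    intro t ht
    by_cases h : ∀ j, δ ≤ ‖(t : ℂ) - z j‖
    · exact Or.inl ⟨ht, h⟩
    · exact Or.inr (mem_iUnion.2 (by simpa using h))
  calc volume s
      ≤ volume {t ∈ s | ∀ j, δ ≤ ‖(t : ℂ) - z j‖} +
          volume (⋃ j, {t : ℝ | ‖(t : ℂ) - z j‖ < δ}) :=
        (measure_mono hcover).trans (measure_union_le _ _)
    _ ≤ volume {t ∈ s | ∀ j, δ ≤ ‖(t : ℂ) - z j‖} + ∑ _j : ι, ENNReal.ofReal (2 * δ) := by
        gcongr
        exact (measure_iUnion_fintype_le _ _).trans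
          (Finset.sum_le_sum fun j _ => volume_setOf_norm_ofReal_sub_lt_le (z j) δ)
    _ = _ := by simp [Finset.sum_const, nsmul_eq_mul]

theorem pow_mul_norm_le_norm_mul_prod {𝕜 : Type*} [NormedField 𝕜] {n : ℕ} (c : 𝕜)
    (x : Fin n → 𝕜) {δ : ℝ} (hδ : 0 ≤ δ) (hx : ∀ j, δ ≤ ‖x j‖) :
    δ ^ n * ‖c‖ ≤ ‖c * ∏ j, x j‖ := by
  have hprod : δ ^ n ≤ ∏ j, ‖x j‖ := by
    simpa using Finset.prod_le_prod (s := Finset.univ) (fun j _ => hδ) (fun j _ => hx j)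
  rw [norm_mul, norm_prod, mul_comm ‖c‖]
  exact mul_le_mul_of_nonneg_right hprod (norm_nonneg c)

theorem statement12_general (n : ℕ) (a b : ℝ) (hab : a < b) (r : Fin n → ℂ) :
    ENNReal.ofReal ((b - a) / 2) ≤
      volume {t ∈ Set.Icc a b | ∀ j, (b - a) / (4 * n) ≤ ‖(t : ℂ) - r j‖} ∧
    ∀ c : ℂ,
      ENNReal.ofReal ((b - a) / 2) ≤
        volume {t ∈ Set.Icc a b |
          ((b - a) / (4 * n)) ^ n * ‖c‖ ≤
            ‖c * ∏ j, ((t : ℂ) - r j)‖} := by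
  have hδ : 0 ≤ (b - a) / (4 * n) := div_nonneg (sub_nonneg.2 hab.le) (by positivity)
  have hlost : n * ENNReal.ofReal (2 * ((b - a) / (4 * n))) ≤ ENNReal.ofReal ((b - a) / 2) := by
    rw [← ENNReal.ofReal_natCast, ← ENNReal.ofReal_mul (Nat.cast_nonneg n)]
    refine ENNReal.ofReal_le_ofReal ?_
    calc (n : ℝ) * (2 * ((b - a) / (4 * n))) = (b - a) / 2 * (n / n) := by ring
      _ ≤ (b - a) / 2 := mul_le_of_le_one_right (by linarith) (div_self_le_one _)
  have hgood := volume_le_volume_setOf_forall_le_norm_sub_add (Icc a b) r ((b - a) / (4 * n))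
  rw [Real.volume_Icc, Fintype.card_fin] at hgood
  have hhalf : ENNReal.ofReal (b - a) =
      ENNReal.ofReal ((b - a) / 2) + ENNReal.ofReal ((b - a) / 2) := by
    rw [← ENNReal.ofReal_add (by linarith) (by linarith), add_halves]
  have hmain := (ENNReal.add_le_add_iff_right ENNReal.ofReal_ne_top).1
    (hhalf ▸ hgood.trans (by gcongr))
  exact ⟨hmain, fun c => hmain.trans <| measure_mono fun t ht =>
    ⟨ht.1, pow_mul_norm_le_norm_mul_prod c _ hδ ht.2⟩⟩

/-- root-avoidance estimate from the proof of Theorem 3.1 of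
Katz–Rogers. Let `I = [a,b]` be a compact interval of positive length and
`r_1, …, r_n ∈ ℂ`. The set of `t ∈ I` with `|t - r_j| ≥ |I|/(4n)` for all `j` has Lebesgue
measure at least `|I|/2`; consequently, for any `c ∈ ℂ` the polynomial
`P(t) = c (t - r_1) ⋯ (t - r_n)` satisfies `|P(t)| ≥ (|I|/(4n))^n |c|` on a subset of `I`
of measure at least `|I|/2`. -/
theorem statement12 (n : ℕ) (hn : 1 ≤ n) (a b : ℝ) (hab : a < b) (r : Fin n → ℂ) :
    ENNReal.ofReal ((b - a) / 2) ≤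
      volume {t ∈ Set.Icc a b | ∀ j, (b - a) / (4 * n) ≤ ‖(t : ℂ) - r j‖} ∧
    ∀ c : ℂ,
      ENNReal.ofReal ((b - a) / 2) ≤
        volume {t ∈ Set.Icc a b |
          ((b - a) / (4 * n)) ^ n * ‖c‖ ≤
            ‖c * ∏ j, ((t : ℂ) - r j)‖} :=
  statement12_general n a b hab r
end
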